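/- If r, s ∈ ℂ³ are linearly independent over ℝ and ω(r,s) = 0, then r, s and r × s are linearly independent over ℝ. -/

import Mathlib

/-- The anti-bilinear cross product on ℂ³. -/
noncomputable def cross (r s : ℂ × ℂ × ℂ) : ℂ × ℂ × ℂ :=
  (starRingEnd ℂ r.2.1 * starRingEnd ℂ s.2.2 - starRingEnd ℂ r.2.2 * starRingEnd ℂ s.2.1,
   starRingEnd ℂ r.2.2 * starRingEnd ℂ s.1 - starRingEnd ℂ r.1 * starRingEnd ℂ s.2.2,
   starRingEnd ℂ r.1 * starRingEnd ℂ s.2.1 - starRingEnd ℂ r.2.1 * starRingEnd ℂ s.1)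

/-- The standard Hermitian inner product on ℂ³. -/
noncomputable def herm (u w : ℂ × ℂ × ℂ) : ℂ :=
  u.1 * starRingEnd ℂ w.1 + u.2.1 * starRingEnd ℂ w.2.1 + u.2.2 * starRingEnd ℂ w.2.2

/-- The standard Kähler form ω(u,w) = −Im⟨u,w⟩ on ℂ³. -/
noncomputable def omegaForm (u w : ℂ × ℂ × ℂ) : ℝ := -(herm u w).im

/-! `r × s` is Hermitian-orthogonal to `r` and `s`, hence to their complex span, so it lies outside
their real span once it is nonzero. By Lagrange's identity `|r × s|² = |r|²|s|² − |⟨r,s⟩|²`, the vector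
`|s|² r − ⟨r,s⟩ s` has squared norm `|s|² |r × s|²`. Since `ω(r,s) = 0` makes `⟨r,s⟩` real, this
vector is a real combination of `r` and `s` with nonzero coefficient `|s|²`, so it is nonzero by
independence, and therefore `r × s ≠ 0`. -/

lemma herm_add_left (x y w : ℂ × ℂ × ℂ) : herm (x + y) w = herm x w + herm y w := by
  simp only [herm, Prod.fst_add, Prod.snd_add]
  ring

lemma herm_smul_left (c : ℂ) (x w : ℂ × ℂ × ℂ) : herm (c • x) w = c * herm x w := by
  simp only [herm, Prod.smul_fst, Prod.smul_snd, smul_eq_mul]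
  ring

lemma herm_zero_right (u : ℂ × ℂ × ℂ) : herm u 0 = 0 := by
  simp [herm]

noncomputable def hermLeft (w : ℂ × ℂ × ℂ) : (ℂ × ℂ × ℂ) →ₗ[ℂ] ℂ where
  toFun u := herm u w
  map_add' x y := herm_add_left x y w
  map_smul' c x := herm_smul_left c x w

lemma herm_self_eq (u : ℂ × ℂ × ℂ) :
    herm u u = ((Complex.normSq u.1 + Complex.normSq u.2.1 + Complex.normSq u.2.2 : ℝ) : ℂ) := by
  simp [herm, Complex.mul_conj]

lemma herm_self_eq_ofReal_re (u : ℂ × ℂ × ℂ) : herm u u = ((herm u u).re : ℂ) := by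
  rw [herm_self_eq, Complex.ofReal_re]

lemma herm_self_eq_zero_iff {u : ℂ × ℂ × ℂ} : herm u u = 0 ↔ u = 0 := by
  have h₁ := Complex.normSq_nonneg u.1
  have h₂ := Complex.normSq_nonneg u.2.1
  have h₃ := Complex.normSq_nonneg u.2.2
  rw [herm_self_eq, Complex.ofReal_eq_zero, add_eq_zero_iff_of_nonneg (add_nonneg h₁ h₂) h₃,
    add_eq_zero_iff_of_nonneg h₁ h₂]
  simp [Prod.ext_iff, and_assoc]

lemma herm_eq_ofReal_re_of_omegaForm_eq_zero {u w : ℂ × ℂ × ℂ} (h : omegaForm u w = 0) :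
    herm u w = ((herm u w).re : ℂ) :=
  Complex.ext rfl (by simpa [omegaForm] using h)

lemma herm_left_cross (r s : ℂ × ℂ × ℂ) : herm r (cross r s) = 0 := by
  simp only [herm, cross, map_sub, map_mul, Complex.conj_conj]
  ring

lemma herm_right_cross (r s : ℂ × ℂ × ℂ) : herm s (cross r s) = 0 := by
  simp only [herm, cross, map_sub, map_mul, Complex.conj_conj]
  ring

lemma herm_cross_self (r s : ℂ × ℂ × ℂ) :
    herm (cross r s) (cross r s) = herm r r * herm s s - herm r s * herm s r := by
  simp only [herm, cross, map_sub, map_mul, Complex.conj_conj]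
  ring

lemma herm_self_smul_sub_smul (r s : ℂ × ℂ × ℂ) :
    herm (herm s s • r - herm r s • s) (herm s s • r - herm r s • s) =
      herm s s * herm (cross r s) (cross r s) := by
  rw [herm_cross_self]
  simp only [herm, Prod.smul_fst, Prod.smul_snd, Prod.fst_sub, Prod.snd_sub, smul_eq_mul,
    map_sub, map_mul, map_add, Complex.conj_conj]
  ring

lemma cross_ne_zero {r s : ℂ × ℂ × ℂ} (hind : LinearIndependent ℝ ![r, s])
    (hω : omegaForm r s = 0) : cross r s ≠ 0 := by
  intro hcross
  set N := (herm s s).re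
  set g := (herm r s).re
  have hN : herm s s = N := herm_self_eq_ofReal_re s
  have hg : herm r s = g := herm_eq_ofReal_re_of_omegaForm_eq_zero hω
  have hN0 : N ≠ 0 := fun h ↦
    hind.ne_zero 1 (herm_self_eq_zero_iff.mp (by simp [hN, h]))
  have hv : N • r + (-g) • s = 0 := by
    have h := herm_self_smul_sub_smul r s
    rw [hcross, herm_zero_right, mul_zero, herm_self_eq_zero_iff, hN, hg, Complex.coe_smul,
      Complex.coe_smul, sub_eq_add_neg, ← neg_smul] at h
    exact h
  exact hN0 (LinearIndependent.pair_iff.mp hind N (-g) hv).1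

lemma cross_notMem_span {r s : ℂ × ℂ × ℂ} (h : cross r s ≠ 0) :
    cross r s ∉ Submodule.span ℂ {r, s} := by
  have hspan : Submodule.span ℂ {r, s} ≤ LinearMap.ker (hermLeft (cross r s)) :=
    Submodule.span_le.mpr (Set.insert_subset_iff.mpr ⟨herm_left_cross r s,
      Set.singleton_subset_iff.mpr (herm_right_cross r s)⟩)
  exact fun hmem ↦ (mt herm_self_eq_zero_iff.mp h) (hspan hmem)

theorem linearIndependent_cross (r s : ℂ × ℂ × ℂ)
    (hind : LinearIndependent ℝ ![r, s]) (hω : omegaForm r s = 0) :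
    LinearIndependent ℝ ![r, s, cross r s] := by
  have hsnoc : ![r, s, cross r s] = Fin.snoc ![r, s] (cross r s) := by
    ext i : 1
    fin_cases i <;> rfl
  rw [hsnoc, linearIndependent_finSnoc]
  refine ⟨hind, fun hmem ↦ cross_notMem_span (cross_ne_zero hind hω) ?_⟩
  have hrange : Set.range ![r, s] = {r, s} := by simp [Set.pair_comm]
  exact Submodule.span_le_restrictScalars ℝ ℂ _ (hrange ▸ hmem)
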